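/- arXiv:2509.11983 — 2 statements merged into one kernel-verified Lean document; each statement's English description precedes it below -/
import Mathlib

section
/- Let α ∈ (1,2]. For all matrices U, V ∈ ℝ^{m×n} with U ≠ 0, it holds that ‖U+V‖_F^α ≤ ‖U‖_F^α + α‖U‖_F^{α−2}⟨U,V⟩ + 2‖V‖_F^α. -/
open Matrix MeasureTheory

/-- Trace inner product `⟨A,B⟩ = tr(AᵀB) = ∑ᵢⱼ Aᵢⱼ Bᵢⱼ`. -/
def dotp {m n : ℕ} (A B : Matrix (Fin m) (Fin n) ℝ) : ℝ :=
  ∑ i, ∑ j, A i j * B i j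

/-- Frobenius norm `‖A‖_F = ⟨A,A⟩^{1/2}`. -/
noncomputable def frobNorm {m n : ℕ} (A : Matrix (Fin m) (Fin n) ℝ) : ℝ :=
  Real.sqrt (dotp A A)

/-- Spectral norm: the `ℓ²→ℓ²` operator norm. -/
noncomputable def specNorm {m n : ℕ} (A : Matrix (Fin m) (Fin n) ℝ) : ℝ :=
  ‖LinearMap.toContinuousLinearMap (Matrix.toEuclideanLin A)‖

/-- Nuclear norm: the trace of `(AᵀA)^{1/2}`. -/
noncomputable def nucNorm {m n : ℕ} (A : Matrix (Fin m) (Fin n) ℝ) : ℝ :=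
  ((Matrix.posSemidef_conjTranspose_mul_self A).1.eigenvectorUnitary.1 *
    Matrix.diagonal (Real.sqrt ∘ (Matrix.posSemidef_conjTranspose_mul_self A).1.eigenvalues) *
    (star (Matrix.posSemidef_conjTranspose_mul_self A).1.eigenvectorUnitary : Matrix (Fin n) (Fin n) ℝ)).trace

/-! ### Auxiliary scalar lemmas -/

/-- Concavity tangent bound for `z ↦ z^β`, `0 ≤ β ≤ 1`. -/
lemma aux_conc_rpow {x z β : ℝ} (hx : 0 < x) (hz : 0 ≤ z) (hβ0 : 0 ≤ β) (hβ1 : β ≤ 1) :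
    z ^ β ≤ x ^ β + β * x ^ (β - 1) * (z - x) := by
  have hs : -1 ≤ z / x - 1 := by
    have : 0 ≤ z / x := div_nonneg hz hx.le
    linarith
  have hB := rpow_one_add_le_one_add_mul_self hs hβ0 hβ1
  have h1 : (1 + (z / x - 1)) = z / x := by ring
  rw [h1, Real.div_rpow hz hx.le] at hB
  have hxβ : 0 < x ^ β := Real.rpow_pos_of_pos hx β
  have h3 : x ^ (β - 1) = x ^ β / x := by
    rw [Real.rpow_sub hx, Real.rpow_one]
  have h4 := mul_le_mul_of_nonneg_left hB hxβ.le
  have hx0 : x ≠ 0 := hx.ne'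
  calc z ^ β = x ^ β * (z ^ β / x ^ β) := by field_simp
    _ ≤ x ^ β * (1 + β * (z / x - 1)) := h4
    _ = x ^ β + β * (x ^ β / x) * (z - x) := by field_simp
    _ = x ^ β + β * x ^ (β - 1) * (z - x) := by rw [h3]

lemma aux_rpow_succ {a p : ℝ} (ha : 0 < a) : a ^ p * a = a ^ (p + 1) := by
  have : a ^ (p + 1) = a ^ p * a ^ (1:ℝ) := by rw [← Real.rpow_add ha]
  rw [this, Real.rpow_one]

lemma aux_key_P3 {α a b : ℝ} (hα1 : 1 < α) (hα2 : α ≤ 2) (ha : 0 < a) (hab : a < b) :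
    α * (a ^ (α - 1) * b) ≤ b ^ α + α * (a * b ^ (α - 1)) := by
  have hα0 : (0:ℝ) ≤ α := by linarith
  have hb0 : 0 < b := ha.trans hab
  have hba1 : 0 < b ^ (α - 1) := Real.rpow_pos_of_pos hb0 _
  have hs : (0:ℝ) ≤ b / a - 1 := by
    rw [sub_nonneg, le_div_iff₀ ha]; linarith
  have hB := rpow_one_add_le_one_add_mul_self (by linarith : (-1:ℝ) ≤ b / a - 1)
    (by linarith : (0:ℝ) ≤ 2 - α) (by linarith : 2 - α ≤ 1)
  rw [show (1 + (b / a - 1)) = b / a by ring] at hB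
  have h2 : b ^ (2 - α) = a ^ (2 - α) * (b / a) ^ (2 - α) := by
    rw [← Real.mul_rpow ha.le (div_nonneg hb0.le ha.le)]
    congr 1
    field_simp
  have h3 : b ^ (2 - α) ≤ a ^ (2 - α) * (1 + (2 - α) * (b / a - 1)) := by
    rw [h2]
    exact mul_le_mul_of_nonneg_left hB (Real.rpow_pos_of_pos ha _).le
  have hsplit : a ^ (α - 1) * b = (a ^ (α - 1) * b ^ (α - 1)) * b ^ (2 - α) := by
    rw [mul_assoc, ← Real.rpow_add hb0]
    congr 1
    · norm_num
  have hcancel : a ^ (α - 1) * a ^ (2 - α) = a := by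
    rw [← Real.rpow_add ha]
    norm_num
  have hstep : a ^ (α - 1) * b ≤ b ^ (α - 1) * (a + (2 - α) * (a * (b / a - 1))) := by
    calc a ^ (α - 1) * b = (a ^ (α - 1) * b ^ (α - 1)) * b ^ (2 - α) := hsplit
      _ ≤ (a ^ (α - 1) * b ^ (α - 1)) * (a ^ (2 - α) * (1 + (2 - α) * (b / a - 1))) := by
          apply mul_le_mul_of_nonneg_left h3 (by positivity)
      _ = b ^ (α - 1) * ((a ^ (α - 1) * a ^ (2 - α)) * (1 + (2 - α) * (b / a - 1))) := by
          ring
      _ = b ^ (α - 1) * (a * (1 + (2 - α) * (b / a - 1))) := by rw [hcancel]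
      _ = b ^ (α - 1) * (a + (2 - α) * (a * (b / a - 1))) := by ring
  have hcalc : a * (b / a - 1) = b - a := by field_simp
  rw [hcalc] at hstep
  have hq : α * (2 - α) ≤ 1 := by nlinarith [sq_nonneg (α - 1)]
  have hnn : (0:ℝ) ≤ (b - a) * b ^ (α - 1) := mul_nonneg (by linarith) hba1.le
  have hm : α * (2 - α) * ((b - a) * b ^ (α - 1)) ≤ 1 * ((b - a) * b ^ (α - 1)) :=
    mul_le_mul_of_nonneg_right hq hnn
  have hm2 : (b - a) * b ^ (α - 1) ≤ b * b ^ (α - 1) :=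
    mul_le_mul_of_nonneg_right (by linarith) hba1.le
  have hbn : b ^ (α - 1) * b = b ^ α := by
    rw [aux_rpow_succ hb0]; congr 1; ring
  have h4 := mul_le_mul_of_nonneg_left hstep hα0
  nlinarith [h4, hm, hm2]

lemma aux_key_scalar {α a b t : ℝ} (hα1 : 1 < α) (hα2 : α ≤ 2) (ha : 0 < a) (hb : 0 ≤ b)
    (ht : -(a * b) ≤ t) (hz : 0 ≤ a ^ 2 + 2 * t + b ^ 2) :
    (a ^ 2 + 2 * t + b ^ 2) ^ (α / 2) ≤ a ^ α + α * a ^ (α - 2) * t + 2 * b ^ α := by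
  have hβ0 : (0:ℝ) ≤ α / 2 := by linarith
  have hβ1 : α / 2 ≤ 1 := by linarith
  have hα2' : α - 2 ≤ 0 := by linarith
  have hα0 : (0:ℝ) ≤ α := by linarith
  have ha2 : (0:ℝ) < a ^ 2 := by positivity
  have haα : (a ^ 2 : ℝ) ^ (α / 2) = a ^ α := by
    rw [← Real.rpow_natCast a 2, ← Real.rpow_mul ha.le]; ring_nf
  have haα2 : (a ^ 2 : ℝ) ^ (α / 2 - 1) = a ^ (α - 2) := by
    rw [← Real.rpow_natCast a 2, ← Real.rpow_mul ha.le]; ring_nf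
  rcases le_or_gt b a with hba | hab
  · -- Case b ≤ a : expand around a²
    have h := aux_conc_rpow ha2 hz hβ0 hβ1
    rw [haα, haα2] at h
    have hkey : α / 2 * a ^ (α - 2) * b ^ 2 ≤ 2 * b ^ α := by
      rcases eq_or_lt_of_le hb with hb0 | hb0
      · rw [← hb0, Real.zero_rpow (by linarith)]
        norm_num
      · have h1 : a ^ (α - 2) ≤ b ^ (α - 2) :=
          Real.rpow_le_rpow_of_nonpos hb0 hba hα2'
        have h2 : b ^ (α - 2) * b ^ 2 = b ^ α := by
          rw [← Real.rpow_natCast b 2, ← Real.rpow_add hb0]; norm_num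
        have hb2 : (0:ℝ) ≤ b ^ 2 := by positivity
        have hX : a ^ (α - 2) * b ^ 2 ≤ b ^ α := by
          calc a ^ (α - 2) * b ^ 2 ≤ b ^ (α - 2) * b ^ 2 :=
                mul_le_mul_of_nonneg_right h1 hb2
            _ = b ^ α := h2
        have hXnn : (0:ℝ) ≤ a ^ (α - 2) * b ^ 2 := by positivity
        nlinarith [mul_nonneg (show (0:ℝ) ≤ 1 - α / 2 by linarith) hXnn]
    nlinarith [h, hkey]
  · -- Case a < b : expand around b²
    have hb0 : 0 < b := ha.trans hab
    have hb2 : (0:ℝ) < b ^ 2 := by positivity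
    have hbα : (b ^ 2 : ℝ) ^ (α / 2) = b ^ α := by
      rw [← Real.rpow_natCast b 2, ← Real.rpow_mul hb0.le]; ring_nf
    have hbα2 : (b ^ 2 : ℝ) ^ (α / 2 - 1) = b ^ (α - 2) := by
      rw [← Real.rpow_natCast b 2, ← Real.rpow_mul hb0.le]; ring_nf
    have h := aux_conc_rpow hb2 hz hβ0 hβ1
    rw [hbα, hbα2] at h
    have hd : b ^ (α - 2) ≤ a ^ (α - 2) :=
      Real.rpow_le_rpow_of_nonpos ha hab.le hα2'
    have haa : a ^ (α - 2) * a ^ 2 = a ^ α := by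
      rw [← Real.rpow_natCast a 2, ← Real.rpow_add ha]; norm_num
    have haa1 : a ^ (α - 2) * a = a ^ (α - 1) := by
      rw [aux_rpow_succ ha]; congr 1; ring
    have hbb1 : b ^ (α - 2) * b = b ^ (α - 1) := by
      rw [aux_rpow_succ hb0]; congr 1; ring
    have hbpos : 0 < b ^ (α - 2) := Real.rpow_pos_of_pos hb0 _
    have hapos : 0 < a ^ (α - 2) := Real.rpow_pos_of_pos ha _
    have hP1 : α / 2 * (b ^ (α - 2) * a ^ 2) ≤ a ^ α := by
      have h1 : b ^ (α - 2) * a ^ 2 ≤ a ^ α := by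
        calc b ^ (α - 2) * a ^ 2 ≤ a ^ (α - 2) * a ^ 2 :=
              mul_le_mul_of_nonneg_right hd ha2.le
          _ = a ^ α := haa
      have h2 : (0:ℝ) ≤ b ^ (α - 2) * a ^ 2 := by positivity
      nlinarith [mul_nonneg (show (0:ℝ) ≤ 1 - α / 2 by linarith) h2]
    have hP2 : α * (b ^ (α - 2) * t) ≤ α * (a ^ (α - 2) * t)
        + α * ((a ^ (α - 2) * a) * b) - α * (a * (b ^ (α - 2) * b)) := by
      have hco : 0 ≤ a ^ (α - 2) - b ^ (α - 2) := by linarith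
      have h1 := mul_le_mul_of_nonneg_right ht hco
      nlinarith [mul_le_mul_of_nonneg_left h1 hα0]
    rw [haa1, hbb1] at hP2
    have hP3 := aux_key_P3 hα1 hα2 ha hab
    linarith [h, hP1, hP2, hP3]

/-! ### Auxiliary matrix lemmas -/

lemma aux_dotp_self_nonneg {m n : ℕ} (A : Matrix (Fin m) (Fin n) ℝ) : 0 ≤ dotp A A :=
  Finset.sum_nonneg fun _ _ => Finset.sum_nonneg fun _ _ => mul_self_nonneg _

lemma aux_frob_sq {m n : ℕ} (A : Matrix (Fin m) (Fin n) ℝ) : frobNorm A ^ 2 = dotp A A :=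
  Real.sq_sqrt (aux_dotp_self_nonneg A)

lemma aux_dotp_expand {m n : ℕ} (U V : Matrix (Fin m) (Fin n) ℝ) :
    dotp (U + V) (U + V) = dotp U U + 2 * dotp U V + dotp V V := by
  simp only [dotp, Matrix.add_apply, Finset.mul_sum, ← Finset.sum_add_distrib]
  exact Finset.sum_congr rfl fun i _ => Finset.sum_congr rfl fun j _ => by ring

lemma aux_dotp_cs {m n : ℕ} (U V : Matrix (Fin m) (Fin n) ℝ) :
    -(frobNorm U * frobNorm V) ≤ dotp U V := by
  have hcs : (dotp U V) ^ 2 ≤ dotp U U * dotp V V := by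
    have h1 : dotp U V = ∑ p : Fin m × Fin n, U p.1 p.2 * V p.1 p.2 := by
      rw [dotp]
      exact (Fintype.sum_prod_type (f := fun p : Fin m × Fin n => U p.1 p.2 * V p.1 p.2)).symm
    have h2 : dotp U U = ∑ p : Fin m × Fin n, (U p.1 p.2) ^ 2 := by
      rw [dotp, show (∑ p : Fin m × Fin n, (U p.1 p.2) ^ 2) = ∑ i, ∑ j, (U i j)^2 from
        Fintype.sum_prod_type (f := fun p : Fin m × Fin n => (U p.1 p.2) ^ 2)]
      simp [sq]
    have h3 : dotp V V = ∑ p : Fin m × Fin n, (V p.1 p.2) ^ 2 := by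
      rw [dotp, show (∑ p : Fin m × Fin n, (V p.1 p.2) ^ 2) = ∑ i, ∑ j, (V i j)^2 from
        Fintype.sum_prod_type (f := fun p : Fin m × Fin n => (V p.1 p.2) ^ 2)]
      simp [sq]
    rw [h1, h2, h3]
    exact Finset.sum_mul_sq_le_sq_mul_sq _ _ _
  have hab : (frobNorm U * frobNorm V) ^ 2 = dotp U U * dotp V V := by
    rw [mul_pow, aux_frob_sq, aux_frob_sq]
  have habnn : 0 ≤ frobNorm U * frobNorm V :=
    mul_nonneg (Real.sqrt_nonneg _) (Real.sqrt_nonneg _)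
  nlinarith [hcs, hab, habnn]

lemma aux_dotp_self_pos {m n : ℕ} (U : Matrix (Fin m) (Fin n) ℝ) (hU : U ≠ 0) :
    0 < dotp U U := by
  have hex : ∃ i j, U i j ≠ 0 := by
    by_contra hc
    push_neg at hc
    exact hU (by ext i j; simp [hc])
  obtain ⟨i, j, hij⟩ := hex
  have h1 : 0 < U i j * U i j := mul_self_pos.mpr hij
  have h2 : U i j * U i j ≤ ∑ j', U i j' * U i j' :=
    Finset.single_le_sum (f := fun j' => U i j' * U i j')
      (fun _ _ => mul_self_nonneg _) (Finset.mem_univ j)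
  have h3 : (∑ j', U i j' * U i j') ≤ ∑ i', ∑ j', U i' j' * U i' j' :=
    Finset.single_le_sum (f := fun i' => ∑ j', U i' j' * U i' j')
      (fun _ _ => Finset.sum_nonneg fun _ _ => mul_self_nonneg _) (Finset.mem_univ i)
  rw [dotp]
  linarith

/-- For `α ∈ (1,2]` and matrices `U ≠ 0`, `V`:
`‖U+V‖_F^α ≤ ‖U‖_F^α + α‖U‖_F^{α−2}⟨U,V⟩ + 2‖V‖_F^α`. -/
theorem stmt_2 {m n : ℕ} (α : ℝ) (hα : α ∈ Set.Ioc (1:ℝ) 2)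
    (U V : Matrix (Fin m) (Fin n) ℝ) (hU : U ≠ 0) :
    frobNorm (U + V) ^ α
      ≤ frobNorm U ^ α + α * frobNorm U ^ (α - 2) * dotp U V + 2 * frobNorm V ^ α := by
  obtain ⟨hα1, hα2⟩ := hα
  have ha : 0 < frobNorm U := Real.sqrt_pos.mpr (aux_dotp_self_pos U hU)
  have hb : 0 ≤ frobNorm V := Real.sqrt_nonneg _
  have ht := aux_dotp_cs U V
  have hz : dotp (U + V) (U + V)
      = frobNorm U ^ 2 + 2 * dotp U V + frobNorm V ^ 2 := by
    rw [aux_dotp_expand, aux_frob_sq, aux_frob_sq]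
  have hznn : 0 ≤ frobNorm U ^ 2 + 2 * dotp U V + frobNorm V ^ 2 := by
    rw [← hz]; exact aux_dotp_self_nonneg _
  have hlhs : frobNorm (U + V) ^ α
      = (frobNorm U ^ 2 + 2 * dotp U V + frobNorm V ^ 2) ^ (α / 2) := by
    rw [frobNorm, hz, Real.sqrt_eq_rpow, ← Real.rpow_mul hznn]
    congr 1
    ring
  rw [hlhs]
  exact aux_key_scalar hα1 hα2 ha hb ht hznn
end

section
/- Let β ∈ (0,1) and u ∈ (0, e^{−1}). Then for every real v ≥ (u^{−1} ln(u^{−1}))^{1/β}, it holds that v^{−β} ln v ≤ 2u/β. -/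
/-- Let `β ∈ (0,1)` and `u ∈ (0, e^{−1})`. Then for every real
`v ≥ (u^{−1} ln(u^{−1}))^{1/β}`, it holds that `v^{−β} ln v ≤ 2u/β`. -/
theorem stmt_7 (β u : ℝ) (hβ : β ∈ Set.Ioo (0:ℝ) 1)
    (hu : u ∈ Set.Ioo (0:ℝ) (Real.exp (-1)))
    (v : ℝ) (hv : (u⁻¹ * Real.log u⁻¹) ^ (1/β) ≤ v) :
    v ^ (-β) * Real.log v ≤ 2 * u / β := by
  obtain ⟨hβ0, hβ1⟩ := hβ
  obtain ⟨hu0, hue⟩ := hu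
  have hβne : β ≠ 0 := ne_of_gt hβ0
  have hui0 : (0:ℝ) < u⁻¹ := by positivity
  have hui : Real.exp 1 < u⁻¹ := by
    rw [Real.exp_neg] at hue
    exact (lt_inv_comm₀ (Real.exp_pos 1) hu0).mpr hue
  set t := Real.log u⁻¹ with ht_def
  have ht1 : 1 < t := (Real.lt_log_iff_exp_lt hui0).2 hui
  set w := u⁻¹ * t with hw_def
  have hw0 : (0:ℝ) < w := by positivity
  have hwe : Real.exp 1 < w := by nlinarith [Real.exp_pos 1]
  have hlw : 1 < Real.log w := (Real.lt_log_iff_exp_lt hw0).2 hwe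
  set c := w ^ (1/β) with hc_def
  have hc0 : (0:ℝ) < c := Real.rpow_pos_of_pos hw0 _
  have hlogc : Real.log c = (1/β) * Real.log w := Real.log_rpow hw0 _
  have hβlc : 1 ≤ β * Real.log c := by
    rw [hlogc]; field_simp; linarith
  have hlc0 : 0 < Real.log c := by nlinarith
  have hv0 : 0 < v := lt_of_lt_of_le hc0 hv
  -- Step A: monotone decrease past c
  have hr1 : 1 ≤ v / c := (one_le_div hc0).2 hv
  set r := v / c with hr_def
  have hr0 : 0 < r := by positivity
  have hlr0 : 0 ≤ Real.log r := Real.log_nonneg hr1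
  have hvcr : v = c * r := by rw [hr_def]; field_simp [hc0.ne']
  have hlogv : Real.log v = Real.log c + Real.log r := by
    rw [hvcr, Real.log_mul (ne_of_gt hc0) (ne_of_gt hr0)]
  have hrpow : 1 + β * Real.log r ≤ r ^ β := by
    rw [Real.rpow_def_of_pos hr0]
    have := Real.add_one_le_exp (Real.log r * β)
    linarith [this]
  have hrβ0 : 0 < r ^ β := Real.rpow_pos_of_pos hr0 _
  have hcβ0 : 0 < c ^ β := Real.rpow_pos_of_pos hc0 _
  have key : Real.log c + Real.log r ≤ Real.log c * r ^ β := by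
    have h1 : Real.log c * (1 + β * Real.log r) ≤ Real.log c * r ^ β :=
      mul_le_mul_of_nonneg_left hrpow (le_of_lt hlc0)
    nlinarith
  have hA : v ^ (-β) * Real.log v ≤ c ^ (-β) * Real.log c := by
    have hvpow : v ^ (-β) = c ^ (-β) * r ^ (-β) := by
      rw [hvcr, Real.mul_rpow hc0.le hr0.le]
    rw [hvpow, hlogv, Real.rpow_neg hc0.le, Real.rpow_neg hr0.le]
    have h2 : (r ^ β)⁻¹ * (Real.log c + Real.log r) ≤ Real.log c := by
      rw [inv_mul_le_iff₀ hrβ0]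
      linarith [key]
    have h3 := mul_le_mul_of_nonneg_left h2 (inv_nonneg.mpr hcβ0.le)
    calc (c ^ β)⁻¹ * (r ^ β)⁻¹ * (Real.log c + Real.log r)
        = (c ^ β)⁻¹ * ((r ^ β)⁻¹ * (Real.log c + Real.log r)) := by ring
      _ ≤ (c ^ β)⁻¹ * Real.log c := h3
  -- Step B: compute c ^ (-β) * log c
  have hB : c ^ (-β) * Real.log c = w⁻¹ * Real.log w / β := by
    have h1 : c ^ (-β) = w⁻¹ := by
      rw [hc_def, ← Real.rpow_mul hw0.le]
      have h : 1/β * (-β) = -1 := by field_simp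
      rw [h, Real.rpow_neg_one]
    rw [h1, hlogc]; ring
  -- Step C: the bound at c
  have hC : w⁻¹ * Real.log w / β ≤ 2 * u / β := by
    have hlt : Real.log t ≤ t - 1 := Real.log_le_sub_one_of_pos (by linarith)
    have hlogw : Real.log w = t + Real.log t := by
      rw [hw_def, Real.log_mul (ne_of_gt hui0) (by linarith)]
    have hwinv : w⁻¹ = u / t := by
      rw [hw_def, mul_inv, inv_inv]; ring
    have hmain : w⁻¹ * Real.log w ≤ 2 * u := by
      rw [hwinv, hlogw, div_mul_eq_mul_div, div_le_iff₀ (by linarith : (0:ℝ) < t)]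
      nlinarith
    gcongr
  linarith [hA, hB.le, hC]
end
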